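/- Hausdorff attraction to the bouquets of circles (Lemma 3.1(2)): Let g ∈ GL(3,ℝ) be a loxodromic element with positive eigenvalues λ₁ > λ₂ > λ₃ > 0 and corresponding eigenvectors v₁,v₂,v₃, acting on the flag space X, and fix a metric d on X inducing its topology. Then for every nonempty compact subset K ⊆ X such that B⁻(g) is contained in the interior of K and K is disjoint from B⁺(g), the sequence of compact sets g^{-n}(K) converges to B⁻(g) in the Hausdorff distance d_H; symmetrically, for every nonempty compact K ⊆ X with B⁺(g) ⊆ int(K) and K ∩ B⁻(g) = ∅, the sequence g^{n}(K) converges to B⁺(g) in the Hausdorff distance. -/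

import Mathlib

open Matrix Filter Topology Set

noncomputable section

/-- `V3` is `ℝ³`. -/
abbrev V3 : Type := Fin 3 → ℝ

/-- The group `GL(3,ℝ)` of invertible `3 × 3` real matrices. -/
abbrev GL3 : Type := (Matrix (Fin 3) (Fin 3) ℝ)ˣ

/-- Nonzero vectors of `ℝ³` up to a nonzero scalar. -/
def projSetoid : Setoid {v : V3 // v ≠ 0} where
  r v w := ∃ c : ℝ, c ≠ 0 ∧ w.1 = c • v.1
  iseqv := by
    refine ⟨fun v => ⟨1, one_ne_zero, (one_smul ℝ v.1).symm⟩, ?_, ?_⟩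
    · rintro v w ⟨c, hc, h⟩
      exact ⟨c⁻¹, inv_ne_zero hc, by rw [h, smul_smul, inv_mul_cancel₀ hc, one_smul]⟩
    · rintro u v w ⟨c, hc, h⟩ ⟨d, hd, h'⟩
      exact ⟨d * c, mul_ne_zero hd hc, by rw [h', h, smul_smul]⟩

/-- The real projective plane `ℝP²`, as the quotient of `ℝ³ \ {0}` by nonzero scalings,
with the quotient topology.  (We use the same model for the dual projective plane `ℝP²*`,
a class `[f₁ : f₂ : f₃]*` of linear forms being recorded through its coefficient
vector `(f₁, f₂, f₃)`; the form acts on vectors by the dot product.) -/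
def RP2 : Type := Quotient projSetoid

/-- The projective class `[v]` of a nonzero vector. -/
def RP2.mk (v : V3) (hv : v ≠ 0) : RP2 := Quotient.mk projSetoid ⟨v, hv⟩

instance : TopologicalSpace RP2 :=
  inferInstanceAs (TopologicalSpace (Quotient projSetoid))

lemma RP2.ind {P : RP2 → Prop} (h : ∀ (v : V3) (hv : v ≠ 0), P (RP2.mk v hv)) (p : RP2) : P p := by
  refine Quotient.ind (fun a => ?_) p
  exact h a.1 a.2

lemma RP2.mk_eq_mk_iff {v w : V3} {hv : v ≠ 0} {hw : w ≠ 0} :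
    RP2.mk v hv = RP2.mk w hw ↔ ∃ c : ℝ, c ≠ 0 ∧ w = c • v :=
  ⟨fun h => Quotient.exact h, fun h => Quotient.sound h⟩

lemma ne_zero_of_coord {v : V3} (i : Fin 3) (h : v i ≠ 0) : v ≠ 0 :=
  fun h0 => h (by rw [h0]; rfl)

/-- The projective class of a vector, defaulting to `[e₁]` for the zero vector. -/
def RP2.mk' (v : V3) : RP2 :=
  if h : v = 0 then RP2.mk ![1, 0, 0] (ne_zero_of_coord 0 (by simp)) else RP2.mk v h

lemma e1_ne : (![1, 0, 0] : V3) ≠ 0 := ne_zero_of_coord 0 (by norm_num)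

lemma e3_ne : (![0, 0, 1] : V3) ≠ 0 := ne_zero_of_coord 2 (by simp)

lemma GL3.mulVec_ne {g : GL3} {v : V3} (hv : v ≠ 0) :
    (g : Matrix (Fin 3) (Fin 3) ℝ) *ᵥ v ≠ 0 := by
  intro h
  apply hv
  have h2 : ((g⁻¹ : GL3) : Matrix (Fin 3) (Fin 3) ℝ) *ᵥ
      ((g : Matrix (Fin 3) (Fin 3) ℝ) *ᵥ v) = 0 := by rw [h, Matrix.mulVec_zero]
  rwa [Matrix.mulVec_mulVec, Units.inv_mul, Matrix.one_mulVec] at h2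

/-- The action of `g ∈ GL(3,ℝ)` on `ℝP²`, `g · [v] = [g v]`. -/
def RP2.mapMat (g : GL3) : RP2 → RP2 :=
  Quotient.lift
    (fun a : {v : V3 // v ≠ 0} =>
      RP2.mk ((g : Matrix (Fin 3) (Fin 3) ℝ) *ᵥ a.1) (GL3.mulVec_ne a.2))
    (by
      rintro a b ⟨c, hc, h⟩
      apply Quotient.sound
      refine ⟨c, hc, ?_⟩
      show (g : Matrix (Fin 3) (Fin 3) ℝ) *ᵥ b.1 = c • ((g : Matrix (Fin 3) (Fin 3) ℝ) *ᵥ a.1)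
      rw [h, Matrix.mulVec_smul])

lemma RP2.mapMat_mk (g : GL3) (v : V3) (hv : v ≠ 0) :
    RP2.mapMat g (RP2.mk v hv) =
      RP2.mk ((g : Matrix (Fin 3) (Fin 3) ℝ) *ᵥ v) (GL3.mulVec_ne hv) := rfl

/-- The element of `GL(3,ℝ)` acting on coefficient vectors of linear forms the way `g`
acts on `ℝP²*`:  the coefficient vector of `f ∘ g⁻¹` is `(g⁻¹)ᵀ` applied to that of `f`. -/
def dualGL (g : GL3) : GL3 where
  val := ((g⁻¹ : GL3) : Matrix (Fin 3) (Fin 3) ℝ)ᵀ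
  inv := ((g : GL3) : Matrix (Fin 3) (Fin 3) ℝ)ᵀ
  val_inv := by rw [← Matrix.transpose_mul, Units.mul_inv, Matrix.transpose_one]
  inv_val := by rw [← Matrix.transpose_mul, Units.inv_mul, Matrix.transpose_one]

/-- The flag space `X`: pairs `([v], [f]) ∈ ℝP² × ℝP²*` with `f(v) = 0`. -/
def FlagSpace : Set (RP2 × RP2) :=
  {x | ∀ (v f : V3) (hv : v ≠ 0) (hf : f ≠ 0),
    x.1 = RP2.mk v hv → x.2 = RP2.mk f hf → f ⬝ᵥ v = 0}

/-- Points of the flag space. -/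
abbrev Flag3 : Type := ↥FlagSpace

lemma mem_flagSpace_mk {v f : V3} (hv : v ≠ 0) (hf : f ≠ 0) (h : f ⬝ᵥ v = 0) :
    (RP2.mk v hv, RP2.mk f hf) ∈ FlagSpace := by
  rintro v' f' hv' hf' hp hq
  obtain ⟨c, hc, hcv⟩ := RP2.mk_eq_mk_iff.1 hp
  obtain ⟨d, hd, hdf⟩ := RP2.mk_eq_mk_iff.1 hq
  rw [hcv, hdf, smul_dotProduct, dotProduct_smul, h]
  simp

lemma dot_invariance (g : GL3) (v f : V3) :
    (((dualGL g : GL3) : Matrix (Fin 3) (Fin 3) ℝ) *ᵥ f) ⬝ᵥ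
      ((g : Matrix (Fin 3) (Fin 3) ℝ) *ᵥ v) = f ⬝ᵥ v := by
  have h1 : ((dualGL g : GL3) : Matrix (Fin 3) (Fin 3) ℝ) *ᵥ f =
      f ᵥ* ((g⁻¹ : GL3) : Matrix (Fin 3) (Fin 3) ℝ) := Matrix.mulVec_transpose _ _
  rw [h1, dotProduct_mulVec, Matrix.vecMul_vecMul, Units.inv_mul, Matrix.vecMul_one]

lemma flagPair_mem (g : GL3) {x : RP2 × RP2} (hx : x ∈ FlagSpace) :
    (RP2.mapMat g x.1, RP2.mapMat (dualGL g) x.2) ∈ FlagSpace := by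
  obtain ⟨p, q⟩ := x
  revert hx
  refine Quotient.inductionOn₂ p q ?_
  rintro ⟨v, hv⟩ ⟨f, hf⟩ hx
  have h0 : f ⬝ᵥ v = 0 := hx v f hv hf rfl rfl
  exact mem_flagSpace_mk _ _ (by rw [dot_invariance]; exact h0)

/-- The action of `g ∈ GL(3,ℝ)` on the flag space,
`g · ([v], [f]) = ([g v], [f ∘ g⁻¹])`. -/
def flagMap (g : GL3) (x : Flag3) : Flag3 :=
  ⟨(RP2.mapMat g x.1.1, RP2.mapMat (dualGL g) x.1.2), flagPair_mem g x.2⟩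

/-! ### Composition laws and continuity -/

lemma RP2.mapMat_mapMat (g h : GL3) (p : RP2) :
    RP2.mapMat g (RP2.mapMat h p) = RP2.mapMat (g * h) p := by
  refine Quotient.inductionOn p fun a => ?_
  apply Quotient.sound
  exact ⟨1, one_ne_zero, by simp [Matrix.mulVec_mulVec, Units.val_mul]⟩

lemma RP2.mapMat_one (p : RP2) : RP2.mapMat 1 p = p := by
  refine Quotient.inductionOn p fun a => ?_
  apply Quotient.sound
  exact ⟨1, one_ne_zero, by simp [Matrix.one_mulVec, Units.val_one]⟩

lemma dualGL_mul (g h : GL3) : dualGL (g * h) = dualGL g * dualGL h := by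
  apply Units.ext
  rw [Units.val_mul]
  show (((g * h)⁻¹ : GL3) : Matrix (Fin 3) (Fin 3) ℝ)ᵀ =
    ((g⁻¹ : GL3) : Matrix (Fin 3) (Fin 3) ℝ)ᵀ * ((h⁻¹ : GL3) : Matrix (Fin 3) (Fin 3) ℝ)ᵀ
  rw [_root_.mul_inv_rev, Units.val_mul, Matrix.transpose_mul]

lemma dualGL_one : dualGL (1 : GL3) = 1 := by
  apply Units.ext
  show (((1 : GL3)⁻¹ : GL3) : Matrix (Fin 3) (Fin 3) ℝ)ᵀ = ((1 : GL3) : Matrix (Fin 3) (Fin 3) ℝ)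
  rw [inv_one, Units.val_one, Matrix.transpose_one]

lemma flagMap_flagMap (g h : GL3) (x : Flag3) :
    flagMap g (flagMap h x) = flagMap (g * h) x := by
  apply Subtype.ext
  apply Prod.ext
  · exact RP2.mapMat_mapMat g h x.1.1
  · show RP2.mapMat (dualGL g) (RP2.mapMat (dualGL h) x.1.2) = RP2.mapMat (dualGL (g * h)) x.1.2
    rw [RP2.mapMat_mapMat, dualGL_mul]

lemma flagMap_one (x : Flag3) : flagMap 1 x = x := by
  apply Subtype.ext
  apply Prod.ext
  · exact RP2.mapMat_one x.1.1
  · show RP2.mapMat (dualGL 1) x.1.2 = x.1.2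
    rw [dualGL_one, RP2.mapMat_one]

lemma continuous_mulVec (M : Matrix (Fin 3) (Fin 3) ℝ) :
    Continuous fun v : V3 => M *ᵥ v := by
  have h : (fun v : V3 => M *ᵥ v) = fun v => fun i => ∑ j, M i j * v j := by
    funext v i
    simp [Matrix.mulVec, dotProduct]
  rw [h]
  exact continuous_pi fun i =>
    continuous_finset_sum _ fun j _ => continuous_const.mul (continuous_apply j)

lemma continuous_mapMat (g : GL3) : Continuous (RP2.mapMat g) := by
  apply Continuous.quotient_lift
  exact continuous_quotient_mk'.comp
    (Continuous.subtype_mk ((continuous_mulVec _).comp continuous_subtype_val) _)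

lemma continuous_flagMap (g : GL3) : Continuous (flagMap g) := by
  apply Continuous.subtype_mk
  exact ((continuous_mapMat g).comp (continuous_fst.comp continuous_subtype_val)).prodMk
    ((continuous_mapMat (dualGL g)).comp (continuous_snd.comp continuous_subtype_val))

/-- The action of `g ∈ GL(3,ℝ)` on the flag space, as a homeomorphism. -/
def flagHomeo (g : GL3) : Flag3 ≃ₜ Flag3 where
  toFun := flagMap g
  invFun := flagMap g⁻¹
  left_inv := fun x => by rw [flagMap_flagMap, inv_mul_cancel, flagMap_one]
  right_inv := fun x => by rw [flagMap_flagMap, mul_inv_cancel, flagMap_one]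
  continuous_toFun := continuous_flagMap g
  continuous_invFun := continuous_flagMap g⁻¹

/-- The group of homeomorphisms of a topological space
(with `(f * g) x = f (g x)`). -/
instance homeoGroup (Z : Type*) [TopologicalSpace Z] : Group (Z ≃ₜ Z) where
  mul f g := g.trans f
  one := Homeomorph.refl Z
  inv := Homeomorph.symm
  mul_assoc _ _ _ := Homeomorph.ext fun _ => rfl
  one_mul _ := Homeomorph.ext fun _ => rfl
  mul_one _ := Homeomorph.ext fun _ => rfl
  inv_mul_cancel f := Homeomorph.ext fun x => f.symm_apply_apply x

/-! ### Geometric objects in the flag space -/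

/-- The α-circle of a point `p ∈ ℝP²`: all flags whose point is `p`. -/
def Cα (p : RP2) : Set Flag3 := {x | x.1.1 = p}

/-- The β-circle of the projective line with defining form (class) `q`:
all flags whose plane is `ker q`. -/
def Cβ (q : RP2) : Set Flag3 := {x | x.1.2 = q}

/-- The plane of the flag `x` contains the direction of the vector `u`. -/
def planeContains (x : Flag3) (u : V3) : Prop :=
  ∀ (f : V3) (hf : f ≠ 0), x.1.2 = RP2.mk f hf → f ⬝ᵥ u = 0

/-- The point of the flag `x` lies on the projective line defined by the linear
form of coefficients `w`. -/
def pointOnForm (x : Flag3) (w : V3) : Prop :=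
  ∀ (v : V3) (hv : v ≠ 0), x.1.1 = RP2.mk v hv → w ⬝ᵥ v = 0

/-- The β-circle of the projective line spanned by the (independent) directions of
`u` and `w`: all flags whose plane contains both. -/
def CβSpan (u w : V3) : Set Flag3 := {x | planeContains x u ∧ planeContains x w}

lemma li_ne_zero_0 {v1 v2 v3 : V3} (h : LinearIndependent ℝ ![v1, v2, v3]) : v1 ≠ 0 := by
  have := h.ne_zero 0; simpa using this

lemma li_ne_zero_1 {v1 v2 v3 : V3} (h : LinearIndependent ℝ ![v1, v2, v3]) : v2 ≠ 0 := by
  have := h.ne_zero 1; simpa using this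

lemma li_ne_zero_2 {v1 v2 v3 : V3} (h : LinearIndependent ℝ ![v1, v2, v3]) : v3 ≠ 0 := by
  have := h.ne_zero 2; simpa using this

/-- The repulsive bouquet of circles `B⁻(g) = C_α([v₃]) ∪ C_β(span(v₂,v₃))` of a
loxodromic element with eigenvectors `v₁, v₂, v₃` (eigenvalues in decreasing order
of modulus). -/
def bouquetMinus (v2 v3 : V3) (h3 : v3 ≠ 0) : Set Flag3 :=
  Cα (RP2.mk v3 h3) ∪ CβSpan v2 v3

/-- The attractive bouquet of circles `B⁺(g) = C_α([v₁]) ∪ C_β(span(v₁,v₂))`. -/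
def bouquetPlus (v1 v2 : V3) (h1 : v1 ≠ 0) : Set Flag3 :=
  Cα (RP2.mk v1 h1) ∪ CβSpan v1 v2

/-- The dynamic set of a point `x` under a sequence of maps `g n`: all limits of
`g (n k) (x k)` for a strictly increasing sequence `(n k)` and a sequence `x k → x`. -/
def DynSet {M : Type*} [TopologicalSpace M] (g : ℕ → M → M) (x : M) : Set M :=
  {y | ∃ φ : ℕ → ℕ, StrictMono φ ∧ ∃ u : ℕ → M,
    Tendsto u atTop (𝓝 x) ∧ Tendsto (fun k => g (φ k) (u k)) atTop (𝓝 y)}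

end

/-!
Index the eigenvectors from `0`, write points in the eigenbasis `v` and linear forms in its
dual basis. Then `g⁻ⁿ` multiplies the point coordinates by `lᵢ⁻ⁿ` and the form coordinates by
`lᵢⁿ`. Flags of `K` stay away from `B⁺`: their points keep a weight `≥ δ` on coordinates `1, 2`
and their forms on coordinates `0, 1`. So under `g⁻ⁿ` the weight of point coordinate `0` plus
that of form coordinate `2` is `O((l₁/l₀)ⁿ + (l₂/l₁)ⁿ)`, uniformly on `K`. By the incidence
`f(u) = 0` of a flag `([u], [f])`, this gauge vanishes exactly on `B⁻`, and on the compact flag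
space it then controls the distance to `B⁻` for any compatible metric. Conversely `B⁻` is
`g`-invariant and lies in `K`, hence in every `g⁻ⁿK`. The attractive case is the repulsive one
for `g⁻¹`, with the eigenvectors in reverse order.
-/

open Metric

noncomputable section

section CoordRatio

variable {ι : Type*} [Fintype ι]

def coordRatio (i : ι) (w : ι → ℝ) : ℝ := |w i| / ‖w‖

lemma coordRatio_nonneg (i : ι) (w : ι → ℝ) : 0 ≤ coordRatio i w := by
  unfold coordRatio; positivity

lemma coordRatio_eq_zero_iff {i : ι} {w : ι → ℝ} : coordRatio i w = 0 ↔ w i = 0 := by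
  refine ⟨fun h => ?_, fun h => by simp [coordRatio, h]⟩
  rcases div_eq_zero_iff.1 h with h | h
  · exact abs_eq_zero.1 h
  · rw [norm_eq_zero.1 h, Pi.zero_apply]

lemma coordRatio_nonpos_iff {i : ι} {w : ι → ℝ} : coordRatio i w ≤ 0 ↔ w i = 0 :=
  ⟨fun h => coordRatio_eq_zero_iff.1 (h.antisymm (coordRatio_nonneg i w)),
    fun h => (coordRatio_eq_zero_iff.2 h).le⟩

lemma coordRatio_smul (i : ι) (w : ι → ℝ) {c : ℝ} (hc : c ≠ 0) :
    coordRatio i (c • w) = coordRatio i w := by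
  simp only [coordRatio, Pi.smul_apply, smul_eq_mul, abs_mul, norm_smul, Real.norm_eq_abs]
  exact mul_div_mul_left _ _ (abs_ne_zero.2 hc)

lemma continuousOn_coordRatio (i : ι) : ContinuousOn (coordRatio i) {w | w ≠ 0} :=
  ((continuous_apply i).abs.continuousOn).div continuous_norm.continuousOn
    fun _ hw => norm_ne_zero_iff.2 hw

lemma mul_le_norm_mul {μ w : ι → ℝ} (hμ : ∀ k, 0 < μ k) {j k : ι} (hjk : μ j ≤ μ k)
    {δ : ℝ} (h : δ ≤ coordRatio k w) : μ j * δ * ‖w‖ ≤ ‖μ * w‖ := by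
  have hδw : δ * ‖w‖ ≤ |w k| := by
    rcases (norm_nonneg w).eq_or_lt with hw | hw
    · rw [← hw, mul_zero]; exact abs_nonneg _
    · exact (le_div_iff₀ hw).1 h
  calc μ j * δ * ‖w‖ = μ j * (δ * ‖w‖) := mul_assoc _ _ _
    _ ≤ μ j * |w k| := mul_le_mul_of_nonneg_left hδw (hμ j).le
    _ ≤ μ k * |w k| := mul_le_mul_of_nonneg_right hjk (abs_nonneg _)
    _ = ‖(μ * w) k‖ := by rw [Pi.mul_apply, Real.norm_eq_abs, abs_mul, abs_of_pos (hμ k)]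
    _ ≤ ‖μ * w‖ := norm_le_pi_norm _ k

lemma coordRatio_mul_le {μ w : ι → ℝ} (hμ : ∀ k, 0 < μ k) (i : ι) {j k : ι}
    (hjk : μ j ≤ μ k) {δ : ℝ} (hδ : 0 < δ)
    (h : δ ≤ max (coordRatio j w) (coordRatio k w)) :
    coordRatio i (μ * w) ≤ μ i / (μ j * δ) := by
  have hlow : μ j * δ * ‖w‖ ≤ ‖μ * w‖ := by
    rcases le_max_iff.1 h with h | h
    · exact mul_le_norm_mul hμ le_rfl h
    · exact mul_le_norm_mul hμ hjk h
  have hw : 0 < ‖w‖ := norm_pos_iff.2 fun hw => by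
    simp only [hw, coordRatio, Pi.zero_apply, abs_zero, zero_div, max_self] at h
    linarith
  have hpos : 0 < μ j * δ * ‖w‖ := by have := hμ j; positivity
  calc coordRatio i (μ * w) = μ i * |w i| / ‖μ * w‖ := by
        rw [coordRatio, Pi.mul_apply, abs_mul, abs_of_pos (hμ i)]
    _ ≤ μ i * ‖w‖ / (μ j * δ * ‖w‖) :=
        div_le_div₀ (by have := hμ i; positivity)
          (mul_le_mul_of_nonneg_left (norm_le_pi_norm w i) (hμ i).le) hpos hlow
    _ = μ i / (μ j * δ) := by field_simp

end CoordRatio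

lemma exists_pos_forall_infDist_lt {X : Type*} [PseudoMetricSpace X] [CompactSpace X]
    {Φ : X → ℝ} (hΦ : Continuous Φ) {S : Set X} (hS : ∀ x ∉ S, 0 < Φ x) {ε : ℝ}
    (hε : 0 < ε) : ∃ η > 0, ∀ x, Φ x < η → infDist x S < ε := by
  have hC : IsCompact {x | ε ≤ infDist x S} :=
    (isClosed_le continuous_const (continuous_infDist_pt S)).isCompact
  obtain ⟨η, hη, hηC⟩ := hC.exists_forall_le' hΦ.continuousOn fun x hx =>
    hS x fun hxS => by linarith [infDist_zero_of_mem hxS, show ε ≤ infDist x S from hx]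
  exact ⟨η, hη, fun x hx => lt_of_not_ge fun h => (hηC x h).not_gt hx⟩

lemma tendsto_hausdorffDist_of_forall_le {X : Type*} [t : TopologicalSpace X] [CompactSpace X]
    (m : PseudoMetricSpace X) (hm : m.toUniformSpace.toTopologicalSpace = t)
    {Φ : X → ℝ} (hΦ : Continuous Φ) {S : Set X} (hS : ∀ x ∉ S, 0 < Φ x)
    {A : ℕ → Set X} (hSA : ∀ n, S ⊆ A n) {r : ℕ → ℝ} (hr : Tendsto r atTop (𝓝 0))
    (hA : ∀ n, ∀ x ∈ A n, Φ x ≤ r n) :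
    Tendsto (fun n => @hausdorffDist X m (A n) S) atTop (𝓝 0) := by
  subst hm
  refine tendsto_atTop.2 fun ε hε => ?_
  obtain ⟨η, hη, hηS⟩ := exists_pos_forall_infDist_lt hΦ hS (half_pos hε)
  obtain ⟨N, hN⟩ := tendsto_atTop.1 hr η hη
  refine ⟨N, fun n hn => ?_⟩
  have hle : hausdorffDist (A n) S ≤ ε / 2 := by
    refine hausdorffDist_le_of_infDist (half_pos hε).le (fun x hx => (hηS x ?_).le)
      fun x hx => by rw [infDist_zero_of_mem (hSA n hx)]; positivity
    have hrn := hN n hn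
    rw [Real.dist_eq, sub_zero] at hrn
    linarith [hA n x hx, le_abs_self (r n)]
  rw [Real.dist_eq, sub_zero, abs_of_nonneg hausdorffDist_nonneg]
  linarith

lemma RP2.continuous_mk {Y : Type*} [TopologicalSpace Y] {F : Y → V3} (hF : Continuous F)
    (hF0 : ∀ y, F y ≠ 0) : Continuous fun y => RP2.mk (F y) (hF0 y) :=
  continuous_quot_mk.comp (hF.subtype_mk hF0)

lemma RP2.mk_normalize {v : V3} (hv : v ≠ 0) :
    RP2.mk (‖v‖⁻¹ • v) (smul_ne_zero (inv_ne_zero (norm_ne_zero_iff.2 hv)) hv) =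
      RP2.mk v hv :=
  RP2.mk_eq_mk_iff.2 ⟨‖v‖, norm_ne_zero_iff.2 hv,
    by rw [smul_smul, mul_inv_cancel₀ (norm_ne_zero_iff.2 hv), one_smul]⟩

lemma Flag3.ind {P : Flag3 → Prop}
    (h : ∀ (u f : V3) (hu : u ≠ 0) (hf : f ≠ 0) (huf : f ⬝ᵥ u = 0),
      P ⟨(RP2.mk u hu, RP2.mk f hf), mem_flagSpace_mk hu hf huf⟩)
    (x : Flag3) : P x := by
  obtain ⟨⟨p, q⟩, hx⟩ := x
  induction p using RP2.ind with | h u hu => ?_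
  induction q using RP2.ind with | h f hf => ?_
  exact h u f hu hf (hx u f hu hf rfl rfl)

lemma planeContains_iff {x : Flag3} {f : V3} {hf : f ≠ 0} (hx : x.1.2 = RP2.mk f hf) (w : V3) :
    planeContains x w ↔ f ⬝ᵥ w = 0 := by
  refine ⟨fun h => h f hf hx, fun h f' hf' hx' => ?_⟩
  obtain ⟨c, -, rfl⟩ := RP2.mk_eq_mk_iff.1 (hx.symm.trans hx')
  rw [smul_dotProduct, h, smul_zero]

instance : CompactSpace Flag3 := by
  let S : Set (V3 × V3) := {p | ‖p.1‖ = 1 ∧ ‖p.2‖ = 1 ∧ p.2 ⬝ᵥ p.1 = 0}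
  have hS : IsCompact S := by
    refine isCompact_of_isClosed_isBounded ?_ ?_
    · exact (isClosed_eq (by fun_prop) continuous_const).inter
        ((isClosed_eq (by fun_prop) continuous_const).inter
          (isClosed_eq (Continuous.dotProduct (by fun_prop) (by fun_prop)) continuous_const))
    · refine (isBounded_closedBall (x := (0 : V3 × V3)) (r := 1)).subset fun p hp => ?_
      rw [mem_closedBall_zero_iff, Prod.norm_def, hp.1, hp.2.1, max_self]
  have := isCompact_iff_compactSpace.1 hS
  have hne : ∀ {w : V3}, ‖w‖ = 1 → w ≠ 0 := fun h => norm_ne_zero_iff.1 (h ▸ one_ne_zero)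
  refine Function.Surjective.compactSpace
    (f := fun p : S => ⟨(RP2.mk p.1.1 (hne p.2.1), RP2.mk p.1.2 (hne p.2.2.1)),
      mem_flagSpace_mk _ _ p.2.2.2⟩) ?_ ?_
  · exact Continuous.subtype_mk
      ((RP2.continuous_mk (by fun_prop) _).prodMk (RP2.continuous_mk (by fun_prop) _)) _
  · intro x
    induction x using Flag3.ind with | h u f hu hf huf => ?_
    refine ⟨⟨(‖u‖⁻¹ • u, ‖f‖⁻¹ • f), ?_, ?_, ?_⟩, ?_⟩
    · exact norm_smul_inv_norm hu
    · exact norm_smul_inv_norm hf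
    · simp only [smul_dotProduct, dotProduct_smul, huf, smul_zero]
    · exact Subtype.ext (Prod.ext (RP2.mk_normalize hu) (RP2.mk_normalize hf))

def RP2.coordRatio (T : V3 ≃ₗ[ℝ] V3) (i : Fin 3) : RP2 → ℝ :=
  Quotient.lift (fun a => _root_.coordRatio i (T a.1)) <| by
    rintro ⟨v, hv⟩ ⟨w, hw⟩ ⟨c, hc, rfl⟩
    simp only [map_smul, coordRatio_smul _ _ hc]

lemma RP2.coordRatio_mk (T : V3 ≃ₗ[ℝ] V3) (i : Fin 3) {v : V3} (hv : v ≠ 0) :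
    RP2.coordRatio T i (RP2.mk v hv) = _root_.coordRatio i (T v) := rfl

lemma RP2.coordRatio_nonneg (T : V3 ≃ₗ[ℝ] V3) (i : Fin 3) (p : RP2) :
    0 ≤ RP2.coordRatio T i p := by
  induction p using RP2.ind with | h v hv => exact _root_.coordRatio_nonneg i (T v)

lemma RP2.continuous_coordRatio (T : V3 ≃ₗ[ℝ] V3) (i : Fin 3) :
    Continuous (RP2.coordRatio T i) :=
  Continuous.quotient_lift ((continuousOn_coordRatio i).comp_continuous
    (T.toLinearMap.continuous_of_finiteDimensional.comp continuous_subtype_val)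
    fun a => T.map_ne_zero_iff.2 a.2) _

section Eigenvectors

variable {n K : Type*} [Fintype n] [DecidableEq n] [Field K]

lemma Matrix.units_pow_mulVec {g : (Matrix n n K)ˣ} {w : n → K} {c : K}
    (h : (g : Matrix n n K) *ᵥ w = c • w) (k : ℕ) :
    ((g ^ k : (Matrix n n K)ˣ) : Matrix n n K) *ᵥ w = c ^ k • w := by
  induction k with
  | zero => simp
  | succ k ih =>
    rw [pow_succ, Units.val_mul, ← Matrix.mulVec_mulVec, h, Matrix.mulVec_smul, ih, smul_smul,
      pow_succ, mul_comm]

lemma Matrix.units_inv_mulVec {g : (Matrix n n K)ˣ} {w : n → K} {c : K} (hc : c ≠ 0)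
    (h : (g : Matrix n n K) *ᵥ w = c • w) :
    ((g⁻¹ : (Matrix n n K)ˣ) : Matrix n n K) *ᵥ w = c⁻¹ • w := by
  calc _ = ((g⁻¹ : (Matrix n n K)ˣ) : Matrix n n K) *ᵥ (c⁻¹ • (g : Matrix n n K) *ᵥ w) :=
        by rw [h, inv_smul_smul₀ hc]
    _ = c⁻¹ • w := by
        rw [Matrix.mulVec_smul, Matrix.mulVec_mulVec, Units.inv_mul, Matrix.one_mulVec]

end Eigenvectors

section Eigenbasis

variable {v : Fin 3 → V3} (hv : LinearIndependent ℝ v)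

def pointCoords : V3 ≃ₗ[ℝ] V3 :=
  (basisOfLinearIndependentOfCardEqFinrank hv (by simp)).equivFun

def formCoords : V3 ≃ₗ[ℝ] V3 :=
  LinearEquiv.ofInjectiveEndo (Matrix.of v).mulVecLin
    (Matrix.mulVec_injective_iff_isUnit.2 (Matrix.linearIndependent_rows_iff_isUnit.1 hv))

lemma sum_pointCoords_smul (u : V3) : ∑ i, pointCoords hv u i • v i = u := by
  conv_rhs => rw [← (basisOfLinearIndependentOfCardEqFinrank hv (by simp)).sum_equivFun u]
  simp [pointCoords]

lemma pointCoords_self (i j : Fin 3) : pointCoords hv (v i) j = if i = j then 1 else 0 := by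
  have := (basisOfLinearIndependentOfCardEqFinrank hv (by simp)).equivFun_self i j
  simpa [pointCoords] using this

lemma formCoords_apply (f : V3) (i : Fin 3) : formCoords hv f i = f ⬝ᵥ v i :=
  dotProduct_comm (v i) f

lemma dotProduct_eq_sum_pointCoords_mul_formCoords (f u : V3) :
    f ⬝ᵥ u = ∑ i, pointCoords hv u i * formCoords hv f i := by
  conv_lhs => rw [← sum_pointCoords_smul hv u]
  simp [dotProduct_sum, formCoords_apply]

lemma RP2.mk_eq_mk_iff_pointCoords {u : V3} (hu : u ≠ 0) (i : Fin 3) :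
    RP2.mk u hu = RP2.mk (v i) (hv.ne_zero i) ↔ ∀ j ≠ i, pointCoords hv u j = 0 := by
  constructor
  · intro h j hj
    obtain ⟨c, hc, hcu⟩ := RP2.mk_eq_mk_iff.1 h
    rw [show u = c⁻¹ • v i by rw [hcu, inv_smul_smul₀ hc], map_smul, Pi.smul_apply,
      pointCoords_self, if_neg hj.symm, smul_zero]
  · intro h
    have hu' : u = pointCoords hv u i • v i := by
      conv_lhs => rw [← sum_pointCoords_smul hv u]
      exact Finset.sum_eq_single i (fun j _ hj => by rw [h j hj, zero_smul]) (by simp)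
    obtain ⟨c, hc, rfl⟩ : ∃ c ≠ 0, u = c • v i :=
      ⟨_, fun h0 => hu (by rw [hu', h0, zero_smul]), hu'⟩
    exact RP2.mk_eq_mk_iff.2
      ⟨c⁻¹, inv_ne_zero hc, by rw [smul_smul, inv_mul_cancel₀ hc, one_smul]⟩

variable {hv}

lemma pointCoords_mulVec {G : Matrix (Fin 3) (Fin 3) ℝ} {μ : Fin 3 → ℝ}
    (hG : ∀ i, G *ᵥ v i = μ i • v i) (u : V3) :
    pointCoords hv (G *ᵥ u) = μ * pointCoords hv u := by
  have : G *ᵥ u = (pointCoords hv).symm (μ * pointCoords hv u) := by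
    conv_lhs => rw [← sum_pointCoords_smul hv u]
    simp [pointCoords, Module.Basis.equivFun_symm_apply, Matrix.mulVec_sum, Matrix.mulVec_smul,
      hG, smul_smul, mul_comm]
  rw [this, LinearEquiv.apply_symm_apply]

lemma formCoords_dualGL_mulVec {G : GL3} {μ : Fin 3 → ℝ}
    (hG : ∀ i, (G : Matrix (Fin 3) (Fin 3) ℝ) *ᵥ v i = μ i • v i) (hμ : ∀ i, μ i ≠ 0)
    (f : V3) : formCoords hv ((dualGL G : Matrix (Fin 3) (Fin 3) ℝ) *ᵥ f) =
      μ⁻¹ * formCoords hv f := by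
  ext i
  rw [Pi.mul_apply, formCoords_apply, formCoords_apply, Pi.inv_apply, dotProduct_comm,
    show ((dualGL G : GL3) : Matrix (Fin 3) (Fin 3) ℝ) = ((G⁻¹ : GL3) : Matrix _ _ ℝ)ᵀ from rfl,
    Matrix.dotProduct_mulVec, Matrix.vecMul_transpose,
    Matrix.units_inv_mulVec (hμ i) (hG i), smul_dotProduct, dotProduct_comm, smul_eq_mul]

variable (hv)

def bouquetMinusGauge (x : Flag3) : ℝ :=
  RP2.coordRatio (pointCoords hv) 0 x.1.1 + RP2.coordRatio (formCoords hv) 2 x.1.2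

def bouquetPlusGauge (x : Flag3) : ℝ :=
  min (max (RP2.coordRatio (pointCoords hv) 1 x.1.1) (RP2.coordRatio (pointCoords hv) 2 x.1.1))
    (max (RP2.coordRatio (formCoords hv) 1 x.1.2) (RP2.coordRatio (formCoords hv) 0 x.1.2))

lemma continuous_bouquetMinusGauge : Continuous (bouquetMinusGauge hv) :=
  ((RP2.continuous_coordRatio _ 0).comp (continuous_fst.comp continuous_subtype_val)).add
    ((RP2.continuous_coordRatio _ 2).comp (continuous_snd.comp continuous_subtype_val))

lemma continuous_bouquetPlusGauge : Continuous (bouquetPlusGauge hv) := by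
  have hpt := continuous_fst.comp (continuous_subtype_val (p := (· ∈ FlagSpace)))
  have hpl := continuous_snd.comp (continuous_subtype_val (p := (· ∈ FlagSpace)))
  exact (((RP2.continuous_coordRatio _ 1).comp hpt).max
    ((RP2.continuous_coordRatio _ 2).comp hpt)).min
    (((RP2.continuous_coordRatio _ 1).comp hpl).max ((RP2.continuous_coordRatio _ 0).comp hpl))

lemma bouquetMinusGauge_eq_zero_iff_coords {x : Flag3} {u f : V3} {hu : u ≠ 0} {hf : f ≠ 0}
    (hxu : x.1.1 = RP2.mk u hu) (hxf : x.1.2 = RP2.mk f hf) :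
    bouquetMinusGauge hv x = 0 ↔ pointCoords hv u 0 = 0 ∧ formCoords hv f 2 = 0 := by
  rw [bouquetMinusGauge, hxu, hxf, RP2.coordRatio_mk, RP2.coordRatio_mk,
    add_eq_zero_iff_of_nonneg (coordRatio_nonneg _ _) (coordRatio_nonneg _ _),
    coordRatio_eq_zero_iff, coordRatio_eq_zero_iff]

lemma bouquetMinusGauge_eq_zero_iff (x : Flag3) :
    bouquetMinusGauge hv x = 0 ↔ x ∈ bouquetMinus (v 1) (v 2) (hv.ne_zero 2) := by
  induction x using Flag3.ind with | h u f hu hf huf => ?_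
  rw [bouquetMinusGauge_eq_zero_iff_coords hv rfl rfl, bouquetMinus, mem_union, Cα, CβSpan,
    mem_ofPred_eq, mem_ofPred_eq, RP2.mk_eq_mk_iff_pointCoords hv hu, planeContains_iff rfl,
    planeContains_iff rfl, ← formCoords_apply hv, ← formCoords_apply hv]
  set a := pointCoords hv u
  set c := formCoords hv f
  have ha : a ≠ 0 := (pointCoords hv).map_ne_zero_iff.2 hu
  have hc : c ≠ 0 := (formCoords hv).map_ne_zero_iff.2 hf
  have hinc : a 0 * c 0 + a 1 * c 1 + a 2 * c 2 = 0 := by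
    rw [← huf, dotProduct_eq_sum_pointCoords_mul_formCoords hv, Fin.sum_univ_three]
  have hpt : (∀ j ≠ 2, a j = 0) ↔ a 0 = 0 ∧ a 1 = 0 := by simp [Fin.forall_fin_succ]
  have ha2 : a 0 = 0 → a 1 = 0 → a 2 ≠ 0 := fun h0 h1 h2 =>
    ha (by ext j; fin_cases j <;> assumption)
  have hc0 : c 1 = 0 → c 2 = 0 → c 0 ≠ 0 := fun h1 h2 h0 =>
    hc (by ext j; fin_cases j <;> assumption)
  rw [hpt]
  constructor
  · rintro ⟨h0, h2⟩
    rw [h0, h2] at hinc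
    rcases mul_eq_zero.1 (by linarith : a 1 * c 1 = 0) with h1 | h1
    · exact Or.inl ⟨h0, h1⟩
    · exact Or.inr ⟨h1, h2⟩
  · rintro (⟨h0, h1⟩ | ⟨h1, h2⟩)
    · rw [h0, h1] at hinc
      exact ⟨h0, (mul_eq_zero.1 (by linarith : a 2 * c 2 = 0)).resolve_left (ha2 h0 h1)⟩
    · rw [h1, h2] at hinc
      exact ⟨(mul_eq_zero.1 (by linarith : a 0 * c 0 = 0)).resolve_right (hc0 h1 h2), h2⟩

lemma bouquetPlusGauge_pos {x : Flag3} (hx : x ∉ bouquetPlus (v 0) (v 1) (hv.ne_zero 0)) :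
    0 < bouquetPlusGauge hv x := by
  induction x using Flag3.ind with | h u f hu hf huf => ?_
  refine lt_of_not_ge fun h => hx ?_
  rw [bouquetPlusGauge, min_le_iff, max_le_iff, max_le_iff] at h
  simp only [RP2.coordRatio_mk, coordRatio_nonpos_iff] at h
  rcases h with ⟨h1, h2⟩ | ⟨h1, h0⟩
  · refine Or.inl ((RP2.mk_eq_mk_iff_pointCoords hv hu 0).2 ?_)
    simp [Fin.forall_fin_succ, h1, h2]
  · rw [formCoords_apply] at h1 h0
    exact Or.inr ⟨(planeContains_iff rfl _).2 h0, (planeContains_iff rfl _).2 h1⟩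

lemma bouquetMinusGauge_pos {x : Flag3} (hx : x ∉ bouquetMinus (v 1) (v 2) (hv.ne_zero 2)) :
    0 < bouquetMinusGauge hv x :=
  lt_of_le_of_ne (add_nonneg (RP2.coordRatio_nonneg _ _ _) (RP2.coordRatio_nonneg _ _ _))
    (Ne.symm (mt (bouquetMinusGauge_eq_zero_iff hv x).1 hx))

lemma flagMap_mem_bouquetMinus {G : GL3} {μ : Fin 3 → ℝ}
    (hG : ∀ i, (G : Matrix (Fin 3) (Fin 3) ℝ) *ᵥ v i = μ i • v i) (hμ : ∀ i, μ i ≠ 0)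
    {x : Flag3} (hx : x ∈ bouquetMinus (v 1) (v 2) (hv.ne_zero 2)) :
    flagMap G x ∈ bouquetMinus (v 1) (v 2) (hv.ne_zero 2) := by
  induction x using Flag3.ind with | h u f hu hf huf => ?_
  rw [← bouquetMinusGauge_eq_zero_iff hv,
    bouquetMinusGauge_eq_zero_iff_coords hv rfl rfl] at hx ⊢
  rw [pointCoords_mulVec hG, formCoords_dualGL_mulVec hG hμ, Pi.mul_apply, Pi.mul_apply, hx.1,
    hx.2, mul_zero, mul_zero]
  exact ⟨rfl, rfl⟩

variable {hv}

lemma bouquetMinusGauge_flagMap_le {G : GL3} {μ : Fin 3 → ℝ}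
    (hG : ∀ i, (G : Matrix (Fin 3) (Fin 3) ℝ) *ᵥ v i = μ i • v i) (hμ : ∀ i, 0 < μ i)
    (h01 : μ 0 ≤ μ 1) (h12 : μ 1 ≤ μ 2) {δ : ℝ} (hδ : 0 < δ) {x : Flag3}
    (hx : δ ≤ bouquetPlusGauge hv x) :
    bouquetMinusGauge hv (flagMap G x) ≤ (μ 0 / μ 1 + μ 1 / μ 2) / δ := by
  induction x using Flag3.ind with | h u f hu hf huf => ?_
  obtain ⟨hpt, hpl⟩ := le_min_iff.1 hx
  change coordRatio 0 (pointCoords hv (G *ᵥ u)) +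
    coordRatio 2 (formCoords hv ((dualGL G : Matrix (Fin 3) (Fin 3) ℝ) *ᵥ f)) ≤ _
  rw [pointCoords_mulVec hG, formCoords_dualGL_mulVec hG fun i => (hμ i).ne', add_div]
  have hμ' : ∀ i, 0 < μ⁻¹ i := fun i => inv_pos.2 (hμ i)
  have hpt' := coordRatio_mul_le hμ 0 h12 hδ hpt
  have hpl' := coordRatio_mul_le hμ' 2 (inv_anti₀ (hμ 0) h01) hδ hpl
  have := hμ 1; have := hμ 2
  calc _ ≤ μ 0 / (μ 1 * δ) + μ⁻¹ 2 / (μ⁻¹ 1 * δ) := add_le_add hpt' hpl'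
    _ = μ 0 / μ 1 / δ + μ 1 / μ 2 / δ := by simp only [Pi.inv_apply]; field_simp

end Eigenbasis

lemma bouquetMinus_eq_bouquetPlus (u w : V3) (hw : w ≠ 0) :
    bouquetMinus u w hw = bouquetPlus w u hw := by
  rw [bouquetMinus, bouquetPlus, CβSpan, CβSpan]
  simp only [and_comm]

theorem tendsto_hausdorffDist_image_inv_pow_bouquetMinus {v : Fin 3 → V3}
    (hv : LinearIndependent ℝ v) {g : GL3} {l : Fin 3 → ℝ}
    (hg : ∀ i, (g : Matrix (Fin 3) (Fin 3) ℝ) *ᵥ v i = l i • v i)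
    (h2 : 0 < l 2) (h21 : l 2 < l 1) (h10 : l 1 < l 0)
    (m : PseudoMetricSpace Flag3)
    (hm : m.toUniformSpace.toTopologicalSpace = (inferInstance : TopologicalSpace Flag3))
    {K : Set Flag3} (hK : IsCompact K) (hBK : bouquetMinus (v 1) (v 2) (hv.ne_zero 2) ⊆ K)
    (hKB : Disjoint K (bouquetPlus (v 0) (v 1) (hv.ne_zero 0))) :
    Tendsto (fun n : ℕ => @hausdorffDist Flag3 m (flagMap (g ^ n)⁻¹ '' K)
      (bouquetMinus (v 1) (v 2) (hv.ne_zero 2))) atTop (𝓝 0) := by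
  have hl : ∀ i, 0 < l i := by intro i; fin_cases i <;> simp <;> linarith
  obtain ⟨δ, hδ, hδK⟩ := hK.exists_forall_le' (continuous_bouquetPlusGauge hv).continuousOn
    fun x hx => bouquetPlusGauge_pos hv (disjoint_left.1 hKB hx)
  refine tendsto_hausdorffDist_of_forall_le m hm (continuous_bouquetMinusGauge hv)
    (fun x hx => bouquetMinusGauge_pos hv hx) (A := fun n => flagMap (g ^ n)⁻¹ '' K)
    (fun n y hy => ?_) (r := fun n => ((l 1 / l 0) ^ n + (l 2 / l 1) ^ n) / δ) ?_ ?_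
  · refine ⟨flagMap (g ^ n) y, hBK (flagMap_mem_bouquetMinus hv
      (fun i => Matrix.units_pow_mulVec (hg i) n) (fun i => pow_ne_zero n (hl i).ne') hy), ?_⟩
    rw [flagMap_flagMap, inv_mul_cancel, flagMap_one]
  · have hr : ∀ {a b : ℝ}, 0 < a → a < b →
        Tendsto (fun n : ℕ => (a / b) ^ n) atTop (𝓝 0) :=
      fun ha hab => tendsto_pow_atTop_nhds_zero_of_lt_one (div_pos ha (ha.trans hab)).le
        ((div_lt_one (ha.trans hab)).2 hab)
    simpa using ((hr (hl 1) h10).add (hr h2 h21)).div_const δ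
  · rintro n _ ⟨x, hx, rfl⟩
    have := bouquetMinusGauge_flagMap_le (G := (g ^ n)⁻¹) (μ := fun i => (l i ^ n)⁻¹)
      (fun i => Matrix.units_inv_mulVec (pow_ne_zero n (hl i).ne')
        (Matrix.units_pow_mulVec (hg i) n))
      (fun i => inv_pos.2 (pow_pos (hl i) n))
      (inv_anti₀ (pow_pos (hl 1) n) (pow_le_pow_left₀ (hl 1).le h10.le n))
      (inv_anti₀ (pow_pos (hl 2) n) (pow_le_pow_left₀ (hl 2).le h21.le n)) hδ (hδK x hx)
    refine this.trans_eq ?_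
    simp only [inv_div_inv, div_pow]

end

/-- Lemma 3.1(2): Hausdorff attraction of compact neighbourhoods to the repulsive
and attractive bouquets of circles of a loxodromic element with positive eigenvalues,
for any metric on the flag space inducing its topology. -/
theorem hausdorff_attraction_to_bouquets
    (g : GL3) (v1 v2 v3 : V3) (l1 l2 l3 : ℝ)
    (hli : LinearIndependent ℝ ![v1, v2, v3])
    (he1 : (g : Matrix (Fin 3) (Fin 3) ℝ) *ᵥ v1 = l1 • v1)
    (he2 : (g : Matrix (Fin 3) (Fin 3) ℝ) *ᵥ v2 = l2 • v2)
    (he3 : (g : Matrix (Fin 3) (Fin 3) ℝ) *ᵥ v3 = l3 • v3)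
    (hord : l1 > l2 ∧ l2 > l3 ∧ l3 > 0)
    (m : MetricSpace Flag3)
    (hm : m.toPseudoMetricSpace.toUniformSpace.toTopologicalSpace =
      (inferInstance : TopologicalSpace Flag3)) :
    (∀ K : Set Flag3, K.Nonempty → IsCompact K →
      bouquetMinus v2 v3 (li_ne_zero_2 hli) ⊆ interior K →
      Disjoint K (bouquetPlus v1 v2 (li_ne_zero_0 hli)) →
      Filter.Tendsto
        (fun n : ℕ => @Metric.hausdorffDist Flag3 m.toPseudoMetricSpace
          (flagMap ((g ^ n)⁻¹) '' K) (bouquetMinus v2 v3 (li_ne_zero_2 hli)))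
        Filter.atTop (nhds 0)) ∧
    (∀ K : Set Flag3, K.Nonempty → IsCompact K →
      bouquetPlus v1 v2 (li_ne_zero_0 hli) ⊆ interior K →
      Disjoint K (bouquetMinus v2 v3 (li_ne_zero_2 hli)) →
      Filter.Tendsto
        (fun n : ℕ => @Metric.hausdorffDist Flag3 m.toPseudoMetricSpace
          (flagMap (g ^ n) '' K) (bouquetPlus v1 v2 (li_ne_zero_0 hli)))
        Filter.atTop (nhds 0)) := by
  obtain ⟨h12, h23, h3⟩ := hord
  have hg : ∀ i, (g : Matrix (Fin 3) (Fin 3) ℝ) *ᵥ ![v1, v2, v3] i =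
      ![l1, l2, l3] i • ![v1, v2, v3] i := by
    intro i; fin_cases i
    exacts [he1, he2, he3]
  have hli' : LinearIndependent ℝ ![v3, v2, v1] := by
    convert hli.comp _ Fin.rev_injective using 1
    ext i : 1; fin_cases i <;> rfl
  have hg' : ∀ i, ((g⁻¹ : GL3) : Matrix (Fin 3) (Fin 3) ℝ) *ᵥ ![v3, v2, v1] i =
      ![l3⁻¹, l2⁻¹, l1⁻¹] i • ![v3, v2, v1] i := by
    intro i; fin_cases i
    exacts [Matrix.units_inv_mulVec (by linarith) he3, Matrix.units_inv_mulVec (by linarith) he2,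
      Matrix.units_inv_mulVec (by linarith) he1]
  refine ⟨fun K _ hK hBK hKB => ?_, fun K _ hK hBK hKB => ?_⟩
  · exact tendsto_hausdorffDist_image_inv_pow_bouquetMinus hli hg h3 h23 h12
      m.toPseudoMetricSpace hm hK (hBK.trans interior_subset) hKB
  · have := tendsto_hausdorffDist_image_inv_pow_bouquetMinus hli' hg' (inv_pos.2 (by linarith))
      (inv_strictAnti₀ (by linarith) h12) (inv_strictAnti₀ h3 h23) m.toPseudoMetricSpace hm hK
      (by rw [bouquetMinus_eq_bouquetPlus]; exact hBK.trans interior_subset)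
      (by rw [← bouquetMinus_eq_bouquetPlus]; exact hKB)
    rw [bouquetMinus_eq_bouquetPlus] at this
    simp only [inv_pow, inv_inv] at this
    exact this
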